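/- Let 𝒯 be a ℤ/m-graded triangulated category (1 ≤ m ≤ ∞) and let R be a commutative Noetherian ring acting centrally on 𝒯. Let G be a split-generator of 𝒯. Then for any objects X, Y of 𝒯, Supp_R Hom^•(X, Y) ⊆ Supp_R Hom^•(G, G). In particular, any two split-generators G, G′ satisfy Supp_R Hom^•(G, G) = Supp_R Hom^•(G′, G′). -/

import Mathlib

open CategoryTheory Category Limits Pretriangulated DirectSum

universe v u

namespace RouquierDim

variable {C : Type u} [Category.{v} C] [Preadditive C] [HasZeroObject C]
  [HasShift C ℤ] [∀ n : ℤ, (shiftFunctor C n).Additive] [Pretriangulated C]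
  [HasBinaryBiproducts C]

/-- `Z` is a summand of `K`: there are maps `r : Z ⟶ K`, `k : K ⟶ Z` with `r ≫ k = 𝟙 Z`. -/
def IsSummand (Z K : C) : Prop := ∃ (r : Z ⟶ K) (k : K ⟶ Z), r ≫ k = 𝟙 Z

/-- The subcategory `ℐ * 𝒥`: objects `K` admitting a distinguished triangle
`K₀ ⟶ K ⟶ K₁ ⟶ K₀⟦1⟧` with `K₀ ∈ ℐ` and `K₁ ∈ 𝒥`. -/
def star (I J : Set C) : Set C :=
  {K | ∃ (K₀ K₁ : C) (f : K₀ ⟶ K) (g : K ⟶ K₁) (h : K₁ ⟶ K₀⟦(1 : ℤ)⟧),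
    Triangle.mk f g h ∈ (distTriang C) ∧ K₀ ∈ I ∧ K₁ ∈ J}

/-- Membership in `⟨ℐ⟩`, the smallest strictly full subcategory containing `ℐ` and
closed under finite direct sums, shifts, and summands. -/
inductive angleMem (I : Set C) : C → Prop
  | of {X : C} (hX : X ∈ I) : angleMem I X
  | zero {X : C} (hX : IsZero X) : angleMem I X
  | shift {X : C} (n : ℤ) (hX : angleMem I X) : angleMem I (X⟦n⟧)
  | sum {X Y : C} (hX : angleMem I X) (hY : angleMem I Y) : angleMem I (X ⊞ Y)
  | smd {X Y : C} (h : IsSummand X Y) (hY : angleMem I Y) : angleMem I X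
  | iso {X Y : C} (e : X ≅ Y) (hX : angleMem I X) : angleMem I Y

/-- `⟨ℐ⟩` as a set of objects. -/
def angle (I : Set C) : Set C := {X | angleMem I X}

/-- `⟨ℐ⟩_n` for `n ≥ 1`: `⟨ℐ⟩_1 = ⟨ℐ⟩`, `⟨ℐ⟩_{n+1} = ⟨⟨ℐ⟩_n * ⟨ℐ⟩⟩`. (Value `∅` at `n = 0`.) -/
def angleN (I : Set C) : ℕ → Set C
  | 0 => ∅
  | 1 => angle I
  | (n + 2) => angle (star (angleN I (n + 1)) (angle I))

/-- `G` is a split-generator of the triangulated category `C`: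
`C = ⟨G⟩_n` for some `n ∈ ℕ`. -/
def IsSplitGenerator (G : C) : Prop := ∃ n : ℕ, angleN {G} n = Set.univ

/-- A central action of a commutative ring `R` on the (`ℤ/m`-graded) triangulated
category `C`: a ring homomorphism `φ K : R →+* End K` for every object `K`, natural in `K`
and compatible with the shift. -/
structure CentralAction (R : Type*) [CommRing R] where
  φ : ∀ K : C, R →+* End K
  natural : ∀ {K L : C} (f : K ⟶ L) (r : R), φ K r ≫ f = f ≫ φ L r
  shift_comm : ∀ (K : C) (r : R) (n : ℤ), φ (K⟦n⟧) r = (φ K r)⟦n⟧'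

variable {R : Type*} [CommRing R]

/-- The `R`-module structure on `Hom(X, Y)` induced by a central action:
`r • f = f ≫ φ Y r` (equivalently, `φ X r ≫ f`, by naturality). -/
def CentralAction.homModule (A : CentralAction (C := C) R) (X Y : C) :
    Module R (X ⟶ Y) :=
  Module.compHom (X ⟶ Y) (A.φ Y)

/-- `Hom^•(X, Y) = ⊕_{i ∈ ℤ/m} Hom(X, Σ^i Y)` as an `R`-module, for the `ℤ/m`-graded
triangulated category `C` (`m = 0` encodes `m = ∞`, in which case `ℤ/m = ℤ`), packaged
as an object of `ModuleCat R`. -/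
noncomputable def CentralAction.HomBullet (A : CentralAction (C := C) R) (m : ℕ)
    (X Y : C) : ModuleCat R :=
  letI : ∀ i : ZMod m, Module R (X ⟶ Y⟦(ZMod.cast i : ℤ)⟧) := fun _ => A.homModule _ _
  ModuleCat.of R (⨁ i : ZMod m, (X ⟶ Y⟦(ZMod.cast i : ℤ)⟧))

/-!
If `r ∈ R` kills the identity of `G`, then `r ^ n` kills the identity of every object of
`⟨G⟩_n`: the closure operations of `⟨-⟩` preserve this, and for a triangle
`K₀ ⟶ K ⟶ K₁ ⟶` the action on `K` of an element killing `K₁` factors through `K₀`, so the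
exponents add up along `*`. An element killing the identity of `X` kills `Hom^•(X, Y)`. Now if
`𝔭 ∉ Supp Hom^•(G, G)`, some `r ∉ 𝔭` kills the identity of `G`, so some power of it, still
outside `𝔭`, kills `Hom^•(X, Y)`, and `𝔭 ∉ Supp Hom^•(X, Y)`.
-/

namespace CentralAction

variable (A : CentralAction (C := C) R)

def annihilatedBy (r : R) : Set C := {X | A.φ X r = 0}

section

omit [HasZeroObject C] [∀ n : ℤ, (shiftFunctor C n).Additive] [Pretriangulated C]
  [HasBinaryBiproducts C]

@[simp]
lemma mem_annihilatedBy {r : R} {X : C} : X ∈ A.annihilatedBy r ↔ A.φ X r = 0 := Iff.rfl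

lemma mem_annihilator_homBullet {r : R} {X : C} (hX : X ∈ A.annihilatedBy r) (m : ℕ) (Y : C) :
    r ∈ Module.annihilator R (A.HomBullet m X Y) := by
  refine Module.mem_annihilator.mpr fun x => DFinsupp.ext fun i => ?_
  change _ ≫ A.φ _ r = (0 : X ⟶ _)
  rw [← A.natural, hX, zero_comp]

/-- Test against the identity of `X`, placed in degree `0` through `X ≅ X⟦0⟧`. -/
lemma exists_mem_annihilatedBy_of_notMem_support {m : ℕ} {X : C} {p : PrimeSpectrum R}
    (hp : p ∉ Module.support R (A.HomBullet m X X)) :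
    ∃ r ∉ p.asIdeal, X ∈ A.annihilatedBy r := by
  let _ : ∀ i : ZMod m, Module R (X ⟶ X⟦(ZMod.cast i : ℤ)⟧) := fun _ => A.homModule _ _
  let e : X ≅ X⟦(ZMod.cast (0 : ZMod m) : ℤ)⟧ := ((shiftFunctorZero' C _ (by simp)).app X).symm
  let x : ⨁ i : ZMod m, (X ⟶ X⟦(ZMod.cast i : ℤ)⟧) := DirectSum.lof R _ _ 0 e.hom
  obtain ⟨r, hr, hrx⟩ := Module.notMem_support_iff'.mp hp x
  replace hrx : r • x = 0 := hrx
  have he : r • e.hom = 0 := by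
    simpa [x, DirectSum.smul_apply, DirectSum.lof_apply] using congrArg (· 0) hrx
  replace he : e.hom ≫ A.φ _ r = 0 := he
  refine ⟨r, hr, ?_⟩
  rw [mem_annihilatedBy, ← cancel_mono e.hom, A.natural, he, zero_comp]

end

omit [HasZeroObject C] [Pretriangulated C] in
lemma angle_subset_annihilatedBy {I : Set C} {r : R} (hI : I ⊆ A.annihilatedBy r) :
    angle I ⊆ A.annihilatedBy r := by
  intro X hX
  induction hX with
  | of hX => exact hI hX
  | zero hX => exact hX.eq_of_src _ _
  | shift n _ ih => rw [mem_annihilatedBy, A.shift_comm, ih, Functor.map_zero]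
  | sum _ _ ihX ihY =>
    apply biprod.hom_ext
    · rw [A.natural biprod.fst r, ihX, comp_zero, zero_comp]
    · rw [A.natural biprod.snd r, ihY, comp_zero, zero_comp]
  | smd hsmd _ ih =>
    obtain ⟨i, p, hip⟩ := hsmd
    have : A.φ _ r = i ≫ A.φ _ r ≫ p := by rw [← assoc, ← A.natural, assoc, hip, comp_id]
    rw [mem_annihilatedBy, this, ih, zero_comp, comp_zero]
  | iso e _ ih =>
    have : A.φ _ r = e.inv ≫ A.φ _ r ≫ e.hom := by rw [A.natural e.hom, e.inv_hom_id_assoc]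
    rw [mem_annihilatedBy, this, ih, zero_comp, comp_zero]

omit [HasBinaryBiproducts C] in
lemma star_subset_annihilatedBy_mul {I J : Set C} {r s : R} (hI : I ⊆ A.annihilatedBy r)
    (hJ : J ⊆ A.annihilatedBy s) : star I J ⊆ A.annihilatedBy (r * s) := by
  rintro K ⟨K₀, K₁, f, g, h, hT, h₀, h₁⟩
  have hg : A.φ K s ≫ g = 0 := by rw [A.natural g s, hJ h₁, comp_zero]
  obtain ⟨u, hu⟩ := Triangle.coyoneda_exact₂ _ hT (A.φ K s) hg
  replace hu : A.φ K s = (show K ⟶ K₀ from u) ≫ f := hu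
  rw [mem_annihilatedBy, map_mul, End.mul_def, hu, assoc, ← A.natural f r, hI h₀, zero_comp,
    comp_zero]

lemma angleN_subset_annihilatedBy_pow {G : C} {s : R} (hG : G ∈ A.annihilatedBy s) :
    ∀ n, angleN {G} n ⊆ A.annihilatedBy (s ^ n)
  | 0 => Set.empty_subset _
  | 1 => by
    rw [pow_one]
    exact A.angle_subset_annihilatedBy (Set.singleton_subset_iff.mpr hG)
  | n + 2 => A.angle_subset_annihilatedBy <| pow_succ s (n + 1) ▸
      A.star_subset_annihilatedBy_mul (angleN_subset_annihilatedBy_pow hG (n + 1))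
        (A.angle_subset_annihilatedBy (Set.singleton_subset_iff.mpr hG))

lemma support_homBullet_subset_of_isSplitGenerator (m : ℕ) {G : C} (hG : IsSplitGenerator G)
    (X Y : C) : Module.support R (A.HomBullet m X Y) ⊆ Module.support R (A.HomBullet m G G) := by
  intro p hp
  by_contra hpG
  obtain ⟨r, hr, hrG⟩ := A.exists_mem_annihilatedBy_of_notMem_support hpG
  obtain ⟨n, hn⟩ := hG
  have hX : X ∈ A.annihilatedBy (r ^ n) :=
    A.angleN_subset_annihilatedBy_pow hrG n (hn ▸ Set.mem_univ X)
  exact hr <| p.isPrime.mem_of_pow_mem n <|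
    Module.annihilator_le_of_mem_support hp (A.mem_annihilator_homBullet hX m Y)

end CentralAction

theorem support_hom_subset_support_generator_general
    (A : CentralAction (C := C) R) (m : ℕ)
    (G : C) (hG : IsSplitGenerator G) :
    (∀ X Y : C, Module.support R (A.HomBullet m X Y) ⊆ Module.support R (A.HomBullet m G G)) ∧
    (∀ G' : C, IsSplitGenerator G' →
      Module.support R (A.HomBullet m G G) = Module.support R (A.HomBullet m G' G')) :=
  ⟨A.support_homBullet_subset_of_isSplitGenerator m hG, fun _ hG' =>
    (A.support_homBullet_subset_of_isSplitGenerator m hG' G G).antisymm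
      (A.support_homBullet_subset_of_isSplitGenerator m hG _ _)⟩

/-- Let `C` be a `ℤ/m`-graded triangulated category (`1 ≤ m ≤ ∞`; here
`m = 0` encodes `m = ∞`) and `R` a commutative Noetherian ring acting centrally on `C`.
If `G` is a split-generator of `C`, then `Supp_R Hom^•(X, Y) ⊆ Supp_R Hom^•(G, G)` for
all objects `X, Y`; in particular any two split-generators `G, G'` satisfy
`Supp_R Hom^•(G, G) = Supp_R Hom^•(G', G')`. -/
theorem support_hom_subset_support_generator
    [IsNoetherianRing R] (A : CentralAction (C := C) R) (m : ℕ)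
    (hgr : Nonempty (shiftFunctor C (m : ℤ) ≅ 𝟭 C))
    (G : C) (hG : IsSplitGenerator G) :
    (∀ X Y : C, Module.support R (A.HomBullet m X Y) ⊆ Module.support R (A.HomBullet m G G)) ∧
    (∀ G' : C, IsSplitGenerator G' →
      Module.support R (A.HomBullet m G G) = Module.support R (A.HomBullet m G' G')) :=
  support_hom_subset_support_generator_general A m G hG

end RouquierDim
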